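/- arXiv:2106.09528 — 4 statements merged into one kernel-verified Lean document; each statement's English description precedes it below -/
import Mathlib

section
/- For any Ū > 0, along nonnegative solutions of the target-cell-limited system, the function J(U,I,V) = U - Ū - Ū·ln(U/Ū) + I + (δ/p)V satisfies dJ/dt = V·(Ū·β - δc/p). In particular dJ/dt ≤ 0 whenever Ū ≤ δc/(βp). -/
theorem hasDerivAt_const_mul_log_div_const {f : ℝ → ℝ} {f' t : ℝ} (a : ℝ)
    (hf : HasDerivAt f f' t) (ht : f t ≠ 0) :
    HasDerivAt (fun s => a * Real.log (f s / a)) (a * (f' / f t)) t := by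
  rcases eq_or_ne a 0 with rfl | ha
  · simpa using hasDerivAt_const t (0 : ℝ)
  · refine (((hf.div_const a).log (div_ne_zero ht ha)).const_mul a).congr_deriv ?_
    field_simp

theorem hasDerivAt_sub_sub_mul_log_div {f : ℝ → ℝ} {f' t : ℝ} (a : ℝ)
    (hf : HasDerivAt f f' t) (ht : f t ≠ 0) :
    HasDerivAt (fun s => f s - a - a * Real.log (f s / a)) (f' * (1 - a / f t)) t :=
  ((hf.sub_const a).sub (hasDerivAt_const_mul_log_div_const a hf ht)).congr_deriv (by ring)

theorem stmt7_general (β δ p c Ubar : ℝ) (hβ : 0 < β) (hp : 0 < p)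
    (U I V : ℝ → ℝ)
    (hUpos : ∀ t, 0 < U t) (hVnn : ∀ t, 0 ≤ V t)
    (hU : ∀ t, HasDerivAt U (-β * U t * V t) t)
    (hI : ∀ t, HasDerivAt I (β * U t * V t - δ * I t) t)
    (hV : ∀ t, HasDerivAt V (p * I t - c * V t) t) (t : ℝ) :
    HasDerivAt (fun s => U s - Ubar - Ubar * Real.log (U s / Ubar) + I s + (δ / p) * V s)
      (V t * (Ubar * β - δ * c / p)) t ∧
    (Ubar ≤ δ * c / (β * p) → V t * (Ubar * β - δ * c / p) ≤ 0) := by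
  refine ⟨?_, fun hUbar => mul_nonpos_of_nonneg_of_nonpos (hVnn t) ?_⟩
  · have hJ := ((hasDerivAt_sub_sub_mul_log_div Ubar (hU t) (hUpos t).ne').add (hI t)).add
      ((hV t).const_mul (δ / p))
    -- The `β U V` terms and the `δ I` terms cancel; only the `V` terms survive.
    refine hJ.congr_deriv ?_
    field_simp [(hUpos t).ne']
    ring
  · have : Ubar * β ≤ δ * c / p := by
      rwa [le_div_iff₀ (mul_pos hβ hp), ← mul_assoc, ← le_div_iff₀ hp] at hUbar
    linarith

/-- Along nonnegative solutions of the target-cell-limited system with U > 0,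
the Lyapunov candidate J(U,I,V) = U - Ubar - Ubar·ln(U/Ubar) + I + (δ/p)V satisfies
dJ/dt = V·(Ubar·β - δc/p); in particular dJ/dt ≤ 0 whenever Ubar ≤ δc/(βp). -/
theorem stmt7 (β δ p c Ubar : ℝ) (hβ : 0 < β) (hδ : 0 < δ) (hp : 0 < p) (hc : 0 < c)
    (hUbar : 0 < Ubar) (U I V : ℝ → ℝ)
    (hUpos : ∀ t, 0 < U t) (hInn : ∀ t, 0 ≤ I t) (hVnn : ∀ t, 0 ≤ V t)
    (hU : ∀ t, HasDerivAt U (-β * U t * V t) t)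
    (hI : ∀ t, HasDerivAt I (β * U t * V t - δ * I t) t)
    (hV : ∀ t, HasDerivAt V (p * I t - c * V t) t) (t : ℝ) :
    HasDerivAt (fun s => U s - Ubar - Ubar * Real.log (U s / Ubar) + I s + (δ / p) * V s)
      (V t * (Ubar * β - δ * c / p)) t ∧
    (Ubar ≤ δ * c / (β * p) → V t * (Ubar * β - δ * c / p) ≤ 0) :=
  stmt7_general β δ p c Ubar hβ hp U I V hUpos hVnn hU hI hV t
end

section
/- Along any solution of the target-cell-limited system, the quantity L(t) = U(t) + I(t) + (δ/p)·V(t) - (1/R)·ln(U(t)) is constant in time, where R = βp/(cδ). -/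
/-!
Differentiating, `U + I` changes at rate `-δ I`, which `(δ / p) V` turns into `-(c δ / p) V`;
since `(log U)' = -β V`, this is exactly cancelled by `-(1 / R) log U` with `1 / R = c δ / (β p)`.
-/

noncomputable def targetCellFirstIntegral (β δ p c : ℝ) (U I V : ℝ → ℝ) (t : ℝ) : ℝ :=
  U t + I t + (δ / p) * V t - (1 / (β * p / (c * δ))) * Real.log (U t)

theorem hasDerivAt_targetCellFirstIntegral {β δ p c t : ℝ} {U I V : ℝ → ℝ}
    (hβ : β ≠ 0) (hp : p ≠ 0) (hUt : U t ≠ 0)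
    (hU : HasDerivAt U (-β * U t * V t) t)
    (hI : HasDerivAt I (β * U t * V t - δ * I t) t)
    (hV : HasDerivAt V (p * I t - c * V t) t) :
    HasDerivAt (targetCellFirstIntegral β δ p c U I V) 0 t := by
  have hlogU : HasDerivAt (fun t => Real.log (U t)) (-β * V t) t := by
    convert hU.log hUt using 1
    field_simp
  refine (((hU.add hI).add (hV.const_mul (δ / p))).sub
    (hlogU.const_mul (1 / (β * p / (c * δ))))).congr_deriv ?_
  rw [one_div_div]
  field_simp
  ring

theorem stmt9_general (β δ p c : ℝ) (hβ : 0 < β) (hp : 0 < p)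
    (U I V : ℝ → ℝ) (hUpos : ∀ t, 0 < U t)
    (hU : ∀ t, HasDerivAt U (-β * U t * V t) t)
    (hI : ∀ t, HasDerivAt I (β * U t * V t - δ * I t) t)
    (hV : ∀ t, HasDerivAt V (p * I t - c * V t) t) :
    ∀ t s : ℝ,
      U t + I t + (δ / p) * V t - (1 / (β * p / (c * δ))) * Real.log (U t) =
      U s + I s + (δ / p) * V s - (1 / (β * p / (c * δ))) * Real.log (U s) := by
  have hL : ∀ t, HasDerivAt (targetCellFirstIntegral β δ p c U I V) 0 t := fun t =>
    hasDerivAt_targetCellFirstIntegral hβ.ne' hp.ne' (hUpos t).ne' (hU t) (hI t) (hV t)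
  exact is_const_of_deriv_eq_zero (fun t => (hL t).differentiableAt) fun t => (hL t).deriv

/-- Along any solution of the target-cell-limited system with U > 0, the quantity
L(t) = U(t) + I(t) + (δ/p)V(t) - (1/R)·ln(U(t)), with R = βp/(cδ), is constant. -/
theorem stmt9 (β δ p c : ℝ) (hβ : 0 < β) (hδ : 0 < δ) (hp : 0 < p) (hc : 0 < c)
    (U I V : ℝ → ℝ) (hUpos : ∀ t, 0 < U t)
    (hU : ∀ t, HasDerivAt U (-β * U t * V t) t)
    (hI : ∀ t, HasDerivAt I (β * U t * V t - δ * I t) t)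
    (hV : ∀ t, HasDerivAt V (p * I t - c * V t) t) :
    ∀ t s : ℝ,
      U t + I t + (δ / p) * V t - (1 / (β * p / (c * δ))) * Real.log (U t) =
      U s + I s + (δ / p) * V s - (1 / (β * p / (c * δ))) * Real.log (U s) :=
  stmt9_general β δ p c hβ hp U I V hUpos hU hI hV
end

section
/- If a compact set X_s consists of equilibrium points of a dynamical system and every point of X_s is ε-δ (Lyapunov) stable, then the set X_s itself is ε-δ stable: for every ε > 0 there exists δ > 0 such that any solution starting within distance δ of X_s remains within distance ε of X_s for all t ≥ 0. -/
/-! Fix `ε` and give each `xs ∈ Xs` its stability radius `r xs`. The balls `ball xs (r xs)` form an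
open cover of the compact set `Xs`, so some thickening of `Xs` lies in their union; its width is the
required `δ`, since a solution starting in `ball xs (r xs)` stays `ε`-close to `xs ∈ Xs`. -/

open Metric Set

theorem stmt10_general {X : Type*} [MetricSpace X] (φ : ℝ → X → X) (Xs : Set X)
    (hcomp : IsCompact Xs)
    (hstab : ∀ xs ∈ Xs, ∀ ε > (0 : ℝ), ∃ δ > (0 : ℝ),
      ∀ x : X, dist x xs < δ → ∀ t : ℝ, 0 ≤ t → dist (φ t x) xs < ε) :
    ∀ ε > (0 : ℝ), ∃ δ > (0 : ℝ),
      ∀ x : X, Metric.infDist x Xs < δ →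
        ∀ t : ℝ, 0 ≤ t → Metric.infDist (φ t x) Xs < ε := by
  intro ε hε
  choose! r hr hr_stab using fun xs hxs => hstab xs hxs ε hε
  have hcover : Xs ⊆ ⋃ xs ∈ Xs, ball xs (r xs) :=
    fun xs hxs => mem_biUnion hxs (mem_ball_self (hr xs hxs))
  obtain ⟨δ, hδ, hthick⟩ :=
    hcomp.exists_thickening_subset_open (isOpen_biUnion fun _ _ => isOpen_ball) hcover
  refine ⟨δ, hδ, fun x hx t ht => ?_⟩
  rcases Xs.eq_empty_or_nonempty with rfl | hne
  · simpa using hε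
  obtain ⟨xs, hxs, hx_ball⟩ := mem_iUnion₂.1 (hthick ((mem_thickening_iff_infDist_lt hne).2 hx))
  exact (infDist_le_dist_of_mem hxs).trans_lt (hr_stab xs hxs x hx_ball t ht)

/-- If a compact set X_s consists of ε-δ stable equilibrium points of a flow φ,
then X_s itself is ε-δ stable. -/
theorem stmt10 {X : Type*} [MetricSpace X] (φ : ℝ → X → X) (Xs : Set X)
    (hcomp : IsCompact Xs)
    (heq : ∀ x ∈ Xs, ∀ t : ℝ, 0 ≤ t → φ t x = x)
    (hstab : ∀ xs ∈ Xs, ∀ ε > (0 : ℝ), ∃ δ > (0 : ℝ),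
      ∀ x : X, dist x xs < δ → ∀ t : ℝ, 0 ≤ t → dist (φ t x) xs < ε) :
    ∀ ε > (0 : ℝ), ∃ δ > (0 : ℝ),
      ∀ x : X, Metric.infDist x Xs < δ →
        ∀ t : ℝ, 0 ≤ t → Metric.infDist (φ t x) Xs < ε :=
  stmt10_general φ Xs hcomp hstab
end

section
/- The principal branch of the Lambert W function is strictly increasing on [-1/e, 0), mapping (-1/e, 0) bijectively onto (-1, 0); consequently the map I₀ ↦ -W(-R·U*·e^{-R(U* + I₀)})/R with U* = 1/R is a bijection from (0, ∞) onto (0, U*). -/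
/-!
On `[-1, ∞)` the map `w ↦ w e^w` is strictly increasing (its derivative is `(1 + w) e^w`), and `W`
is a right inverse of it on `[-1/e, 0)`, so `W` inherits strict monotonicity; on the open intervals
the two maps are mutually inverse bijections `(-1/e, 0) ≃ (-1, 0)`. The map of the last claim
factors as `I ↦ -e^{-(1 + R I)}`, a bijection `(0, ∞) → (-1/e, 0)`, followed by `W` and by the
affine bijection `w ↦ -w / R` of `(-1, 0)` onto `(0, 1/R)`.
-/

open Real Set

theorem strictMonoOn_mul_exp : StrictMonoOn (fun w : ℝ => w * exp w) (Ici (-1)) := by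
  refine strictMonoOn_of_deriv_pos (convex_Ici _) (by fun_prop) fun x hx => ?_
  rw [interior_Ici] at hx
  have hderiv : HasDerivAt (fun w : ℝ => w * exp w) (1 * exp x + x * exp x) x :=
    (hasDerivAt_id x).mul (hasDerivAt_exp x)
  rw [hderiv.deriv, ← add_mul]
  exact mul_pos (by linarith [mem_Ioi.mp hx]) (exp_pos x)

theorem mapsTo_mul_exp_Ioo : MapsTo (fun w : ℝ => w * exp w) (Ioo (-1) 0) (Ioo (-exp (-1)) 0) :=
  fun w hw =>
    ⟨by simpa using strictMonoOn_mul_exp (mem_Ici.mpr le_rfl) (mem_Ici.mpr hw.1.le) hw.1,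
      by simpa using strictMonoOn_mul_exp (mem_Ici.mpr hw.1.le) (by norm_num) hw.2⟩

theorem bijOn_neg_exp_neg_add_mul {R : ℝ} (hR : 0 < R) (a : ℝ) :
    BijOn (fun x => -exp (-(a + R * x))) (Ioi 0) (Ioo (-exp (-a)) 0) := by
  refine InvOn.bijOn (f' := fun y => (-log (-y) - a) / R) ⟨fun x _ => ?_, fun y hy => ?_⟩
    (fun x hx => ?_) (fun y hy => ?_)
  · field_simp
    simp
  · have : -(a + R * ((-log (-y) - a) / R)) = log (-y) := by field_simp; ring
    simp only [this, exp_log (neg_pos.mpr hy.2), neg_neg]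
  · have : exp (-(a + R * x)) < exp (-a) := exp_lt_exp.mpr (by nlinarith [mem_Ioi.mp hx])
    exact ⟨by linarith, by simpa using exp_pos _⟩
  · have hy0 : 0 < -y := neg_pos.mpr hy.2
    have : log (-y) < -a := (log_lt_iff_lt_exp hy0).mpr (by linarith [hy.1])
    exact div_pos (by linarith) hR

theorem bijOn_neg_div_Ioo {R : ℝ} (hR : 0 < R) :
    BijOn (fun w => -w / R) (Ioo (-1) 0) (Ioo 0 (1 / R)) := by
  refine InvOn.bijOn (f' := fun u => -(R * u)) ⟨fun w _ => ?_, fun u _ => ?_⟩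
    (fun w hw => ?_) (fun u hu => ?_)
  · field_simp
  · field_simp
  · exact ⟨div_pos (by linarith [hw.2]) hR, by rw [div_lt_div_iff_of_pos_right hR]; linarith [hw.1]⟩
  · have := (lt_div_iff₀ hR).mp hu.2
    exact ⟨by nlinarith [hu.1], by nlinarith [hu.1]⟩

/-- The principal branch W of the Lambert W function (inverse of w ↦ w·e^w on
[-1,∞)) is strictly increasing on [-1/e, 0), maps (-1/e,0) bijectively onto
(-1,0); consequently I₀ ↦ -W(-R·U*·e^{-R(U*+I₀)})/R, with U* = 1/R, is a
bijection from (0,∞) onto (0, U*). -/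
theorem stmt13 (R : ℝ) (hR : 0 < R) (W : ℝ → ℝ)
    (hW : ∀ w : ℝ, -1 ≤ w → W (w * Real.exp w) = w)
    (hWrange : ∀ y : ℝ, -Real.exp (-1) ≤ y → y < 0 →
      -1 ≤ W y ∧ W y < 0 ∧ W y * Real.exp (W y) = y) :
    StrictMonoOn W (Set.Ico (-Real.exp (-1)) 0) ∧
    Set.BijOn W (Set.Ioo (-Real.exp (-1)) 0) (Set.Ioo (-1) 0) ∧
    Set.BijOn
      (fun I₀ : ℝ => -(W (-(R * (1 / R) * Real.exp (-(R * (1 / R + I₀)))))) / R)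
      (Set.Ioi 0) (Set.Ioo 0 (1 / R)) := by
  have hinv : RightInvOn W (fun w => w * exp w) (Ico (-exp (-1)) 0) :=
    fun y hy => (hWrange y hy.1 hy.2).2.2
  have hmono : StrictMonoOn W (Ico (-exp (-1)) 0) :=
    (Function.monotoneOn_of_rightInvOn_of_mapsTo strictMonoOn_mul_exp.monotoneOn hinv
      fun y hy => (hWrange y hy.1 hy.2).1).strictMonoOn_of_injOn hinv.injOn
  have hmaps : MapsTo W (Ioo (-exp (-1)) 0) (Ioo (-1) 0) := fun y hy => by
    obtain ⟨hle, hneg, hy_eq⟩ := hWrange y hy.1.le hy.2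
    refine ⟨hle.lt_of_ne fun h => ?_, hneg⟩
    rw [← h] at hy_eq
    linarith [hy.1]
  have hbij : BijOn W (Ioo (-exp (-1)) 0) (Ioo (-1) 0) :=
    InvOn.bijOn ⟨fun y hy => hinv ⟨hy.1.le, hy.2⟩, fun w hw => hW w hw.1.le⟩ hmaps
      mapsTo_mul_exp_Ioo
  refine ⟨hmono, hbij, ((bijOn_neg_div_Ioo hR).comp
    (hbij.comp (bijOn_neg_exp_neg_add_mul hR 1))).congr fun I _ => ?_⟩
  simp only [Function.comp_apply]
  field_simp
end
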